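/- Let T be a measure preserving Z²-action, A a set of finite positive measure, ε > 0, θ a direction, and suppose pairwise disjoint positive-measure sets A₁,…,A_k ⊆ A and vectors v₁,…,v_k in the ε-tunnel of θ witness the ε sweeping out property with parameter α ∈ (1/4, 1/2). Let C be measurable with μ(A △ C) < ε·μ(A) and ε sufficiently small (ε < 1/10000 suffices). Then there exists an index i with μ(Aᵢ ∩ C) > (1/2)·μ(Aᵢ) and μ(T^{vᵢ}Aᵢ ∩ C) > (1/2)·μ(T^{vᵢ}Aᵢ); in particular μ(C ∩ T^{vᵢ}C) > 0 for some vᵢ in the ε-tunnel of θ. -/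

import Mathlib

open MeasureTheory

noncomputable section

/-- Embedding of `ℤ²` into `ℝ²`. -/
def toR (n : ℤ × ℤ) : ℝ × ℝ := ((n.1 : ℝ), (n.2 : ℝ))

/-- The Euclidean norm on `ℝ²`. -/
def e2 (p : ℝ × ℝ) : ℝ := Real.sqrt (p.1 ^ 2 + p.2 ^ 2)

/-- `p` lies in the `ε`-tunnel of the direction `θ`, i.e. within Euclidean distance `ε`
of the line through the origin in direction `θ`. -/
def InTunnel (θ ε : ℝ) (p : ℝ × ℝ) : Prop :=
  ∃ t : ℝ, e2 (p - (t * Real.cos θ, t * Real.sin θ)) < ε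

/-- The direction in `[0,π)` associated to a vector `u`: the angle `u` makes with
`sign(u₂)·(1,0)`, and `0` if `u₂ = 0`. -/
def dirOf (u : ℝ × ℝ) : Real :=
  if u.2 = 0 then 0 else Real.arccos (Real.sign u.2 * u.1 / e2 u)

variable {X : Type*} [MeasurableSpace X]

/-- `θ` is a recurrent direction for the `ℤ²`-action `T`. -/
def RecurrentDirection (μ : Measure X) (T : ℤ × ℤ → X → X) (θ : ℝ) : Prop :=
  ∀ ε : ℝ, 0 < ε → ∀ A : Set X, MeasurableSet A → 0 < μ A →
    ∃ n : ℤ × ℤ, n ≠ 0 ∧ InTunnel θ ε (toR n) ∧ 0 < μ (A ∩ T n ⁻¹' A)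

/-- Ergodicity of a `ℤ²`-action. -/
def IsErgodicAction (μ : Measure X) (T : ℤ × ℤ → X → X) : Prop :=
  ∀ A : Set X, MeasurableSet A → (∀ n, T n ⁻¹' A = A) → μ A = 0 ∨ μ Aᶜ = 0

/-- Recurrence of a `ℤ²`-action. -/
def IsRecurrentAction (μ : Measure X) (T : ℤ × ℤ → X → X) : Prop :=
  ∀ A : Set X, MeasurableSet A → 0 < μ A →
    ∃ u : ℤ × ℤ, u ≠ 0 ∧ 0 < μ (A ∩ T u ⁻¹' A)

/-- The `ε` sweeping out property of the direction `θ` for the set `A`. -/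
def SweepsOut (μ : Measure X) (T : ℤ × ℤ → X → X) (θ ε : ℝ) (A : Set X) : Prop :=
  ∀ α : ℝ, 0 < α → α < 1/2 →
    ∃ (k : ℕ) (As : Fin k → Set X) (v : Fin k → ℤ × ℤ),
      (∀ i, MeasurableSet (As i)) ∧ (∀ i, As i ⊆ A) ∧ (∀ i, 0 < μ (As i)) ∧
      (Pairwise fun i j => Disjoint (As i) (As j)) ∧
      (∀ i, InTunnel θ ε (toR (v i))) ∧
      (∀ i, T (v i) '' As i ⊆ A) ∧
      (Pairwise fun i j => Disjoint (T (v i) '' As i) (T (v j) '' As j)) ∧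
      ENNReal.ofReal α * μ A < μ (⋃ i, As i) ∧
      ENNReal.ofReal α * μ A < μ (⋃ i, T (v i) '' As i)

/-! Since the action is invertible, `T^{vᵢ}` preserves the measure of images. If for every `i`
either `Aᵢ` or `T^{vᵢ}Aᵢ` were at most half covered by `C`, that set would lose half of its
measure to `A \ C`; by disjointness these losses add up, so
`α μ(A) < μ(⋃ Aᵢ) ≤ 4 μ(A \ C) < 4ε μ(A)`, impossible for `ε < 1/16`. For a good index, the sets
`T^{vᵢ}(Aᵢ ∩ C)` and `T^{vᵢ}Aᵢ ∩ C` each fill more than half of `T^{vᵢ}Aᵢ`, so they meet, and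
their intersection lies in `C ∩ T^{vᵢ}C`. -/

open Set

section InvertibleAction

variable {G α : Type*} [AddGroup G] {T : G → α → α}

lemma leftInverse_apply_neg (hadd : ∀ m n x, T (m + n) x = T m (T n x))
    (hzero : ∀ x, T 0 x = x) (n : G) : Function.LeftInverse (T (-n)) (T n) := fun x => by
  rw [← hadd, neg_add_cancel, hzero]

lemma image_eq_preimage_neg (hadd : ∀ m n x, T (m + n) x = T m (T n x))
    (hzero : ∀ x, T 0 x = x) (n : G) (S : Set α) : T n '' S = T (-n) ⁻¹' S :=
  congrFun (image_eq_preimage_of_inverse (leftInverse_apply_neg hadd hzero n)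
    fun x => by rw [← hadd, add_neg_cancel, hzero]) S

end InvertibleAction

section MeasurePreservingAction

variable {G : Type*} [AddGroup G] {T : G → X → X} {μ : Measure X}

lemma measurableSet_image_of_measurePreserving (hmp : ∀ n, MeasurePreserving (T n) μ μ)
    (hadd : ∀ m n x, T (m + n) x = T m (T n x)) (hzero : ∀ x, T 0 x = x) (n : G)
    {S : Set X} (hS : MeasurableSet S) : MeasurableSet (T n '' S) := by
  rw [image_eq_preimage_neg hadd hzero]
  exact (hmp (-n)).measurable hS

lemma measure_image_of_measurePreserving (hmp : ∀ n, MeasurePreserving (T n) μ μ)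
    (hadd : ∀ m n x, T (m + n) x = T m (T n x)) (hzero : ∀ x, T 0 x = x) (n : G)
    {S : Set X} (hS : MeasurableSet S) : μ (T n '' S) = μ S := by
  rw [image_eq_preimage_neg hadd hzero]
  exact (hmp (-n)).measure_preimage hS.nullMeasurableSet

end MeasurePreservingAction

section HalfCovering

variable {μ : Measure X} {C : Set X}

lemma measure_le_two_mul_measure_sdiff (hC : MeasurableSet C) {S : Set X} (hS : μ S ≠ ⊤)
    (h : μ (S ∩ C) ≤ μ S / 2) : μ S ≤ 2 * μ (S \ C) := by
  have hhalf : μ S / 2 ≤ μ (S \ C) := by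
    rw [← ENNReal.add_le_add_iff_left (ENNReal.div_ne_top hS two_ne_zero), ENNReal.add_halves]
    calc μ S = μ (S ∩ C) + μ (S \ C) := (measure_inter_add_sdiff S hC).symm
      _ ≤ μ S / 2 + μ (S \ C) := by gcongr
  calc μ S = 2 * (μ S / 2) := (ENNReal.mul_div_cancel two_ne_zero ENNReal.ofNat_ne_top).symm
    _ ≤ 2 * μ (S \ C) := by gcongr

lemma tsum_measure_sdiff_le {ι : Type*} {A : Set X} {P : ι → Set X} (hC : MeasurableSet C)
    (hP : ∀ i, MeasurableSet (P i)) (hPA : ∀ i, P i ⊆ A)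
    (hPd : Pairwise fun i j => Disjoint (P i) (P j)) :
    ∑' i, μ (P i \ C) ≤ μ (A \ C) :=
  (tsum_meas_le_meas_iUnion_of_disjoint μ (fun i => (hP i).diff hC)
      fun _ _ hij => (hPd hij).mono sdiff_subset sdiff_subset).trans
    (measure_mono (iUnion_subset fun i => sdiff_subset_sdiff_left (hPA i)))

lemma exists_more_than_half_covered {ι : Type*} [Countable ι] {A : Set X} {P Q : ι → Set X}
    (hC : MeasurableSet C) (hA : μ A ≠ ⊤) (hP : ∀ i, MeasurableSet (P i))
    (hQ : ∀ i, MeasurableSet (Q i)) (hPA : ∀ i, P i ⊆ A) (hQA : ∀ i, Q i ⊆ A)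
    (hPd : Pairwise fun i j => Disjoint (P i) (P j))
    (hQd : Pairwise fun i j => Disjoint (Q i) (Q j))
    (hPQ : ∀ i, μ (P i) ≤ μ (Q i)) (hlt : 4 * μ (A \ C) < μ (⋃ i, P i)) :
    ∃ i, μ (P i) / 2 < μ (P i ∩ C) ∧ μ (Q i) / 2 < μ (Q i ∩ C) := by
  by_contra! h
  have hfin {S : Set X} (hS : S ⊆ A) : μ S ≠ ⊤ := ((measure_mono hS).trans_lt hA.lt_top).ne
  have hbound (i : ι) : μ (P i) ≤ 2 * μ (P i \ C) + 2 * μ (Q i \ C) := by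
    by_cases hi : μ (P i) / 2 < μ (P i ∩ C)
    · exact (hPQ i).trans <|
        (measure_le_two_mul_measure_sdiff hC (hfin (hQA i)) (h i hi)).trans le_add_self
    · exact (measure_le_two_mul_measure_sdiff hC (hfin (hPA i)) (not_lt.1 hi)).trans le_self_add
  refine (hlt.trans_le ?_).false
  calc μ (⋃ i, P i) ≤ ∑' i, μ (P i) := measure_iUnion_le P
    _ ≤ ∑' i, (2 * μ (P i \ C) + 2 * μ (Q i \ C)) := ENNReal.tsum_le_tsum hbound
    _ = 2 * ∑' i, μ (P i \ C) + 2 * ∑' i, μ (Q i \ C) := by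
      rw [ENNReal.tsum_add, ENNReal.tsum_mul_left, ENNReal.tsum_mul_left]
    _ ≤ 2 * μ (A \ C) + 2 * μ (A \ C) := by
      gcongr
      · exact tsum_measure_sdiff_le hC hP hPA hPd
      · exact tsum_measure_sdiff_le hC hQ hQA hQd
    _ = 4 * μ (A \ C) := by ring

lemma measure_inter_pos_of_half_lt {B S₁ S₂ : Set X} (hS₂ : MeasurableSet S₂) (h₁B : S₁ ⊆ B)
    (h₂B : S₂ ⊆ B) (h₁ : μ B / 2 < μ S₁) (h₂ : μ B / 2 < μ S₂) : 0 < μ (S₁ ∩ S₂) := by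
  refine pos_iff_ne_zero.2 fun h0 => (lt_irrefl (μ B)) ?_
  calc μ B = μ B / 2 + μ B / 2 := (ENNReal.add_halves _).symm
    _ < μ S₁ + μ S₂ := ENNReal.add_lt_add h₁ h₂
    _ = μ (S₁ ∪ S₂) := by rw [← measure_union_add_inter S₁ hS₂, h0, add_zero]
    _ ≤ μ B := measure_mono (union_subset h₁B h₂B)

end HalfCovering

theorem sweeping_out_transfers_to_approximating_set_general
    {X : Type*} [MeasurableSpace X] (μ : Measure X)
    (T : ℤ × ℤ → X → X)
    (hmp : ∀ n, MeasurePreserving (T n) μ μ)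
    (hadd : ∀ m n x, T (m + n) x = T m (T n x)) (hzero : ∀ x, T 0 x = x)
    (A : Set X) (hAfin : μ A < ⊤)
    (ε : ℝ) (hεsmall : ε < 1/10000)
    (α : ℝ) (hα1 : 1/4 < α)
    (k : ℕ) (As : Fin k → Set X) (v : Fin k → ℤ × ℤ)
    (hmeas : ∀ i, MeasurableSet (As i))
    (hsub : ∀ i, As i ⊆ A)
    (hdisj : Pairwise fun i j => Disjoint (As i) (As j))
    (himsub : ∀ i, T (v i) '' As i ⊆ A)
    (himdisj : Pairwise fun i j => Disjoint (T (v i) '' As i) (T (v j) '' As j))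
    (hcov : ENNReal.ofReal α * μ A < μ (⋃ i, As i))
    (C : Set X) (hC : MeasurableSet C)
    (hAC : μ (symmDiff A C) < ENNReal.ofReal ε * μ A) :
    ∃ i : Fin k,
      μ (As i) / 2 < μ (As i ∩ C) ∧
      μ (T (v i) '' As i) / 2 < μ (T (v i) '' As i ∩ C) ∧
      0 < μ (C ∩ T (v i) '' C) := by
  have hμT := measure_image_of_measurePreserving hmp hadd hzero
  have himmeas (i : Fin k) : MeasurableSet (T (v i) '' As i) :=
    measurableSet_image_of_measurePreserving hmp hadd hzero _ (hmeas i)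
  have hcover : 4 * μ (A \ C) < μ (⋃ i, As i) :=
    calc 4 * μ (A \ C) ≤ 4 * μ (symmDiff A C) := by gcongr; exact fun _ hx => Or.inl hx
      _ < 4 * (ENNReal.ofReal ε * μ A) := ENNReal.mul_lt_mul_right (by norm_num) (by norm_num) hAC
      _ ≤ ENNReal.ofReal α * μ A := by
        rw [← mul_assoc, ← ENNReal.ofReal_ofNat 4, ← ENNReal.ofReal_mul (by norm_num)]
        gcongr
        linarith
      _ < μ (⋃ i, As i) := hcov
  obtain ⟨i, hAsC, hTAsC⟩ := exists_more_than_half_covered hC hAfin.ne hmeas himmeas hsub himsub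
    hdisj himdisj (fun i => (hμT _ (hmeas i)).ge) hcover
  refine ⟨i, hAsC, hTAsC, ?_⟩
  have hhalf : μ (T (v i) '' As i) / 2 < μ (T (v i) '' (As i ∩ C)) := by
    rwa [hμT _ (hmeas i), hμT _ ((hmeas i).inter hC)]
  refine (measure_inter_pos_of_half_lt ((himmeas i).inter hC) (image_mono inter_subset_left)
    inter_subset_left hhalf hTAsC).trans_le (measure_mono ?_)
  rintro _ ⟨⟨y, ⟨-, hyC⟩, rfl⟩, -, hxC⟩
  exact ⟨hxC, y, hyC, rfl⟩

/-- If disjoint pieces of `A` and their translates witness the `ε` sweeping out property with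
parameter `α ∈ (1/4, 1/2)`, and `C` approximates `A` within `ε·μ(A)` for small `ε`, then some
piece and its translate are both more than half covered by `C`; in particular `C` meets
`T^{vᵢ}C` for some tunnel vector `vᵢ`. -/
theorem sweeping_out_transfers_to_approximating_set
    {X : Type*} [MeasurableSpace X] (μ : Measure X)
    (T : ℤ × ℤ → X → X)
    (hmp : ∀ n, MeasurePreserving (T n) μ μ)
    (hadd : ∀ m n x, T (m + n) x = T m (T n x)) (hzero : ∀ x, T 0 x = x)
    (A : Set X) (hA : MeasurableSet A) (hApos : 0 < μ A) (hAfin : μ A < ⊤)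
    (ε : ℝ) (hε : 0 < ε) (hεsmall : ε < 1/10000)
    (θ α : ℝ) (hα1 : 1/4 < α) (hα2 : α < 1/2)
    (k : ℕ) (As : Fin k → Set X) (v : Fin k → ℤ × ℤ)
    (hmeas : ∀ i, MeasurableSet (As i))
    (himmeas : ∀ i, MeasurableSet (T (v i) '' As i))
    (hsub : ∀ i, As i ⊆ A) (hpos : ∀ i, 0 < μ (As i))
    (hdisj : Pairwise fun i j => Disjoint (As i) (As j))
    (htun : ∀ i, InTunnel θ ε (toR (v i)))
    (himsub : ∀ i, T (v i) '' As i ⊆ A)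
    (himdisj : Pairwise fun i j => Disjoint (T (v i) '' As i) (T (v j) '' As j))
    (hcov : ENNReal.ofReal α * μ A < μ (⋃ i, As i))
    (himcov : ENNReal.ofReal α * μ A < μ (⋃ i, T (v i) '' As i))
    (C : Set X) (hC : MeasurableSet C)
    (hAC : μ (symmDiff A C) < ENNReal.ofReal ε * μ A) :
    ∃ i : Fin k,
      μ (As i) / 2 < μ (As i ∩ C) ∧
      μ (T (v i) '' As i) / 2 < μ (T (v i) '' As i ∩ C) ∧
      0 < μ (C ∩ T (v i) '' C) :=
  sweeping_out_transfers_to_approximating_set_general μ T hmp hadd hzero A hAfin ε hεsmall α hα1 k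
    As v hmeas hsub hdisj himsub himdisj hcov C hC hAC
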